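/- Let N = {1, ..., n} with n ≥ 2, let Γ be the directed cycle on N with edge set {(i, i+1) : i = 1, ..., n-1} ∪ {(n, 1)}, let f : ℤ_{≥0} → ℝ, and define v_f : 2^N → ℝ by v_f(S) = f(|S|). Then for every player i ∈ N, the sum over all permutations π consistent with Γ of the marginal contribution of i, namely Σ_{π ∈ Π^Γ} (v_f(P̄_π(i)) − v_f(P_π(i))), equals Σ_{j=1}^{n} (f(j) − f(j−1)) = f(n) − f(0). -/

import Mathlib

/-- Edge relation of the directed cycle `(1, 2, ..., n, 1)` on `Fin n`:
there is a directed edge from `i` to `i + 1` (mod `n`). -/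
def cycleEdge (n : ℕ) [NeZero n] (i j : Fin n) : Prop := j = i + 1

/-- `j` is a successor of `i` in the restriction of the cycle digraph to the
coalition `S`, i.e. there is a directed path from `i` to `j` using only
players of `S`. -/
def isSuccessorIn (n : ℕ) [NeZero n] (S : Set (Fin n)) (i j : Fin n) : Prop :=
  Relation.TransGen (fun a b => a ∈ S ∧ b ∈ S ∧ cycleEdge n a b) i j

/-- `i` dominates `j` in the restriction of the cycle digraph to `S`:
`j` is a successor of `i` but `i` is not a successor of `j`. -/
def dominatesIn (n : ℕ) [NeZero n] (S : Set (Fin n)) (i j : Fin n) : Prop :=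
  isSuccessorIn n S i j ∧ ¬ isSuccessorIn n S j i

/-- `P̄_π(i)`: the set of players whose position under `π` is at most that of `i`
(including `i` itself). -/
def Pbar {n : ℕ} (π : Equiv.Perm (Fin n)) (i : Fin n) : Set (Fin n) := {j | π j ≤ π i}

/-- `P_π(i)`: the set of players whose position under `π` is strictly less than
that of `i`. -/
def Pset {n : ℕ} (π : Equiv.Perm (Fin n)) (i : Fin n) : Set (Fin n) := {j | π j < π i}

/-- A permutation `π` is consistent with the directed cycle on `Fin n` if for
every player `i`, no player `j ∈ P̄_π(i)` dominates `i` in the restriction of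
the cycle digraph to `P̄_π(i)`. -/
def consistent (n : ℕ) [NeZero n] (π : Equiv.Perm (Fin n)) : Prop :=
  ∀ i : Fin n, ∀ j ∈ Pbar π i, ¬ dominatesIn n (Pbar π i) j i

/-!
In the restriction of a directed cycle to a coalition `S`, a player can return to itself only
along the whole cycle. So unless `S` is everything, no player reaches one that reaches it back,
and the players dominating `i` are exactly those with a path into `i`, which must enter through
the predecessor `i - 1`. Consistency of `π` therefore says that every player other than the last
one comes before its predecessor. Starting from the last player `l` and walking forward along the
cycle the positions then strictly decrease, which forces `π x = (l - 1) - x`. So the consistent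
orders are the `n` reflections `x ↦ c - x`; under them player `i` occupies every position exactly
once, and its marginal contributions telescope to `f n - f 0`.
-/

open Finset Function
open scoped Fin.NatCast Fin.CommRing

section CycleDigraph

variable {n : ℕ} [NeZero n] {S : Set (Fin n)} {i j : Fin n}

lemma isSuccessorIn.exists_add (h : isSuccessorIn n S i j) :
    ∃ m : ℕ, 0 < m ∧ j = i + m ∧ ∀ t ≤ m, i + (t : Fin n) ∈ S := by
  induction h with
  | single hr =>
    obtain ⟨hi, hj, rfl⟩ := hr
    refine ⟨1, one_pos, by simp, fun t ht => ?_⟩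
    interval_cases t
    · simpa using hi
    · simpa using hj
  | tail _ hr ih =>
    obtain ⟨m, -, rfl, hS⟩ := ih
    obtain ⟨-, hj, rfl⟩ := hr
    refine ⟨m + 1, m.succ_pos, by push_cast; ring, fun t ht => ?_⟩
    rcases Nat.lt_or_eq_of_le ht with ht | rfl
    · exact hS t (by omega)
    · simpa [add_assoc] using hj

lemma eq_univ_of_isSuccessorIn_self (h : isSuccessorIn n S i i) : S = Set.univ := by
  obtain ⟨m, hm, hmi, hS⟩ := h.exists_add
  have hnm : n ≤ m := Nat.le_of_dvd hm (Fin.natCast_eq_zero.mp (by simpa using hmi))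
  refine Set.eq_univ_of_forall fun y => ?_
  simpa using hS (y - i).val (by omega)

lemma isSuccessorIn_univ (i j : Fin n) : isSuccessorIn n Set.univ i j := by
  have hreach : ∀ m : ℕ, isSuccessorIn n Set.univ i (i + ((m + 1 : ℕ) : Fin n)) := by
    intro m
    induction m with
    | zero => exact .single ⟨trivial, trivial, by simp [cycleEdge]⟩
    | succ m ih =>
      refine .tail ih ⟨trivial, trivial, ?_⟩
      simp only [cycleEdge]
      push_cast
      ring
  simpa using hreach (j - i - 1).val

lemma not_dominatesIn_univ (i j : Fin n) : ¬ dominatesIn n Set.univ i j :=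
  fun h => h.2 (isSuccessorIn_univ j i)

lemma isSuccessorIn.pred_mem (h : isSuccessorIn n S j i) : i - 1 ∈ S := by
  obtain ⟨b, -, hb, -, hbi⟩ := Relation.TransGen.tail'_iff.mp h
  rwa [← eq_sub_of_add_eq (hbi : i = b + 1).symm]

lemma dominatesIn_pred (hS : S ≠ Set.univ) (hi : i ∈ S) (hpred : i - 1 ∈ S) :
    dominatesIn n S (i - 1) i :=
  have hedge : cycleEdge n (i - 1) i := (sub_add_cancel i 1).symm
  ⟨.single ⟨hpred, hi, hedge⟩,
    fun h => hS (eq_univ_of_isSuccessorIn_self (.tail h ⟨hpred, hi, hedge⟩))⟩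

end CycleDigraph

section Positions

variable {n : ℕ}

lemma ncard_Pbar (π : Equiv.Perm (Fin n)) (i : Fin n) : (Pbar π i).ncard = (π i).val + 1 := by
  rw [show Pbar π i = π ⁻¹' Set.Iic (π i) from rfl, ← Equiv.image_symm_eq_preimage,
    Set.ncard_image_of_injective _ π.symm.injective, ← coe_Iic, Set.ncard_coe_finset,
    Fin.card_Iic]

lemma ncard_Pset (π : Equiv.Perm (Fin n)) (i : Fin n) : (Pset π i).ncard = (π i).val := by
  rw [show Pset π i = π ⁻¹' Set.Iio (π i) from rfl, ← Equiv.image_symm_eq_preimage,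
    Set.ncard_image_of_injective _ π.symm.injective, ← coe_Iio, Set.ncard_coe_finset,
    Fin.card_Iio]

lemma Pbar_eq_univ_iff {π : Equiv.Perm (Fin (n + 1))} {i : Fin (n + 1)} :
    Pbar π i = Set.univ ↔ π i = Fin.last n := by
  refine ⟨fun h => Fin.last_le_iff.mp ?_, fun h => Set.eq_univ_of_forall fun j => ?_⟩
  · simpa [Pbar] using h.ge (Set.mem_univ (π.symm (Fin.last n)))
  · show π j ≤ π i
    exact h ▸ Fin.le_last (π j)

end Positions

section ConsistentPermutations

variable {n : ℕ}

lemma consistent_iff_lt_pred {π : Equiv.Perm (Fin (n + 1))} :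
    consistent (n + 1) π ↔ ∀ x, π x ≠ Fin.last n → π x < π (x - 1) := by
  refine ⟨fun hc x hx => lt_of_not_ge fun hle => ?_, fun h i j hj hdom => ?_⟩
  · exact hc x (x - 1) hle
      (dominatesIn_pred (mt Pbar_eq_univ_iff.mp hx) (le_refl (π x)) hle)
  · by_cases hi : π i = Fin.last n
    · exact not_dominatesIn_univ j i (Pbar_eq_univ_iff.mpr hi ▸ hdom)
    · exact (h i hi).not_ge hdom.1.pred_mem

lemma eq_subLeft_of_lt_pred {π : Equiv.Perm (Fin (n + 1))}
    (h : ∀ x, π x ≠ Fin.last n → π x < π (x - 1)) :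
    Equiv.subLeft (π.symm (Fin.last n) - 1) = π := by
  set l := π.symm (Fin.last n)
  have hanti : StrictAnti fun k => π (l + k) := by
    refine Fin.strictAnti_iff_succ_lt.mpr fun k => ?_
    have hne : π (l + k.succ) ≠ Fin.last n := fun he =>
      k.succ_ne_zero (add_eq_left.mp (π.injective (he.trans (π.apply_symm_apply _).symm)))
    simpa [← Fin.coeSucc_eq_succ, ← add_assoc] using h _ hne
  have hrev : ∀ k, π (l + k) = Fin.rev k := fun k =>
    Fin.rev_rev (π (l + k)) ▸ congrArg Fin.rev (Fin.rev_strictAnti.comp hanti).apply_eq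
  have hlast : Fin.last n = -1 := eq_neg_of_add_eq_zero_left (Fin.last_add_one n)
  refine Equiv.ext fun x => ?_
  rw [Equiv.subLeft_apply]
  conv_rhs => rw [← add_sub_cancel l x, hrev, ← Fin.last_sub, hlast]
  ring

lemma subLeft_lt_pred (c x : Fin (n + 1)) (hx : c - x ≠ Fin.last n) :
    c - x < c - (x - 1) := by
  rw [sub_sub_eq_add_sub, add_sub_right_comm]
  exact Fin.lt_add_one_iff.mpr (Fin.lt_last_iff_ne_last.mpr hx)

lemma consistent_iff_exists_subLeft_eq {π : Equiv.Perm (Fin (n + 1))} :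
    consistent (n + 1) π ↔ ∃ c, Equiv.subLeft c = π := by
  rw [consistent_iff_lt_pred]
  refine ⟨fun h => ⟨_, eq_subLeft_of_lt_pred h⟩, ?_⟩
  rintro ⟨c, rfl⟩ x
  exact subLeft_lt_pred c x

lemma subLeft_injective : Injective (Equiv.subLeft : Fin (n + 1) → Equiv.Perm (Fin (n + 1))) :=
  fun a b h => by simpa using congrArg (· 0) h

lemma toFinset_consistent :
    (Set.toFinite {π : Equiv.Perm (Fin (n + 1)) | consistent (n + 1) π}).toFinset =
      univ.image Equiv.subLeft := by
  ext π
  simp [consistent_iff_exists_subLeft_eq]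

end ConsistentPermutations

lemma sum_univ_sub_right_telescope {M : Type*} [AddCommGroup M] (f : ℕ → M) {n : ℕ} [NeZero n]
    (i : Fin n) : ∑ c : Fin n, (f ((c - i).val + 1) - f (c - i).val) = f n - f 0 :=
  calc _ = ∑ y : Fin n, (f (y.val + 1) - f y.val) :=
        (Equiv.subRight i).sum_comp fun y => f (y.val + 1) - f y.val
    _ = f n - f 0 := by
      rw [Fin.sum_univ_eq_sum_range (fun t => f (t + 1) - f t), sum_range_sub]

lemma sum_Icc_one_telescope {M : Type*} [AddCommGroup M] (f : ℕ → M) (n : ℕ) :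
    ∑ j ∈ Icc 1 n, (f j - f (j - 1)) = f n - f 0 := by
  rw [← Ico_add_one_right_eq_Icc, sum_Ico_eq_sum_range, add_tsub_cancel_right]
  simpa [add_comm 1] using sum_range_sub f n

theorem cycle_sum_marginal_contributions_general (n : ℕ) [NeZero n]
    (f : ℕ → ℝ) (i : Fin n) :
    (∑ π ∈ (Set.toFinite {π : Equiv.Perm (Fin n) | consistent n π}).toFinset,
        (f (Pbar π i).ncard - f (Pset π i).ncard))
      = ∑ j ∈ Finset.Icc 1 n, (f j - f (j - 1)) ∧
    (∑ π ∈ (Set.toFinite {π : Equiv.Perm (Fin n) | consistent n π}).toFinset,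
        (f (Pbar π i).ncard - f (Pset π i).ncard))
      = f n - f 0 := by
  obtain ⟨m, rfl⟩ := Nat.exists_eq_add_one_of_ne_zero (NeZero.ne n)
  rw [toFinset_consistent, sum_image subLeft_injective.injOn, sum_Icc_one_telescope, and_self]
  simp only [ncard_Pbar, ncard_Pset, Equiv.subLeft_apply]
  exact sum_univ_sub_right_telescope f i

/-- For the symmetric game `v_f(S) = f(|S|)` on the directed `n`-cycle, the sum
over all consistent permutations of the marginal contribution of a fixed player
`i` equals `Σ_{j=1}^n (f(j) - f(j-1))`, which telescopes to `f(n) - f(0)`. -/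
theorem cycle_sum_marginal_contributions (n : ℕ) [NeZero n] (hn : 2 ≤ n)
    (f : ℕ → ℝ) (i : Fin n) :
    (∑ π ∈ (Set.toFinite {π : Equiv.Perm (Fin n) | consistent n π}).toFinset,
        (f (Pbar π i).ncard - f (Pset π i).ncard))
      = ∑ j ∈ Finset.Icc 1 n, (f j - f (j - 1)) ∧
    (∑ π ∈ (Set.toFinite {π : Equiv.Perm (Fin n) | consistent n π}).toFinset,
        (f (Pbar π i).ncard - f (Pset π i).ncard))
      = f n - f 0 :=
  cycle_sum_marginal_contributions_general n f i
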